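/- The family F = {f_n : n ∈ ℕ} with f_n(z) = tan(nz) on the open unit disk is not normal, even though each f_n omits the two values i and −i (which are at fixed positive spherical distance from each other) and for every pair n, m and j = 1,2 the functions f_n − a_j and f_m − a_j share the value 0, where a_1 = i and a_2 = −i. Hence the number of omitted/shared functions in the sharing-based normality criterion cannot be reduced from three to two. -/

import Mathlib

open Filter Topology OnePoint Metric
open scoped Classical

noncomputable def chord : OnePoint ℂ → OnePoint ℂ → ℝ := fun x y =>
  Option.elim (α := ℂ) x
    (Option.elim (α := ℂ) y 0 (fun b => 2 / Real.sqrt (1 + ‖b‖ ^ 2)))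
    (fun a =>
      Option.elim (α := ℂ) y (2 / Real.sqrt (1 + ‖a‖ ^ 2))
        (fun b => 2 * ‖a - b‖ / Real.sqrt ((1 + ‖a‖ ^ 2) * (1 + ‖b‖ ^ 2))))

/-- spherical (arclength) metric on the Riemann sphere, diameter π -/
noncomputable def sph (x y : OnePoint ℂ) : ℝ := 2 * Real.arcsin (chord x y / 2)

/-- value of a meromorphic function as a point of the Riemann sphere -/
noncomputable def sphVal (f : ℂ → ℂ) (z : ℂ) : OnePoint ℂ :=
  if Tendsto (fun w => ‖f w‖) (𝓝[≠] z) atTop then ∞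
  else (((limUnder (𝓝[≠] z) f : ℂ) : OnePoint ℂ))

def IsMeroSphere (D : Set ℂ) (A : ℂ → OnePoint ℂ) : Prop :=
  ∃ a : ℂ → ℂ, MeromorphicOn a D ∧ ∀ z ∈ D, A z = sphVal a z

def IsMeroSphereOrInf (D : Set ℂ) (A : ℂ → OnePoint ℂ) : Prop :=
  IsMeroSphere D A ∨ ∀ z ∈ D, A z = ∞

/-- Normality: every sequence has a subsequence converging locally uniformly (spherically)
to a meromorphic function or to ∞. -/
def NormalOn (D : Set ℂ) (F : Set (ℂ → ℂ)) : Prop :=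
  ∀ f : ℕ → ℂ → ℂ, (∀ n, f n ∈ F) →
    ∃ φ : ℕ → ℕ, StrictMono φ ∧ ∃ G : ℂ → OnePoint ℂ,
      IsMeroSphereOrInf D G ∧
      ∀ K : Set ℂ, K ⊆ D → IsCompact K → ∀ ε : ℝ, 0 < ε →
        ∀ᶠ n in atTop, ∀ z ∈ K, sph (sphVal (f (φ n)) z) (G z) < ε

/-- rational map of degree at most m -/
def IsRatDegLE (m : ℕ) (R : ℂ → ℂ) : Prop :=
  ∃ p q : Polynomial ℂ, q ≠ 0 ∧ p.degree ≤ (m : ℕ) ∧ q.degree ≤ (m : ℕ) ∧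
    ∀ z : ℂ, R z = p.eval z / q.eval z

/-! ### Auxiliary lemmas -/

lemma chord_coe_coe (a b : ℂ) : chord a b
    = 2 * ‖a - b‖ / Real.sqrt ((1 + ‖a‖ ^ 2) * (1 + ‖b‖ ^ 2)) := rfl
lemma chord_inf_coe (b : ℂ) : chord ∞ b = 2 / Real.sqrt (1 + ‖b‖ ^ 2) := rfl
lemma chord_coe_inf (a : ℂ) : chord a ∞ = 2 / Real.sqrt (1 + ‖a‖ ^ 2) := rfl

lemma sphVal_eq_coe {f : ℂ → ℂ} {z c : ℂ} (h : Tendsto f (𝓝[≠] z) (𝓝 c)) :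
    sphVal f z = (c : OnePoint ℂ) := by
  rw [sphVal, if_neg (not_tendsto_atTop_of_tendsto_nhds h.norm), h.limUnder_eq]

lemma sphVal_eq_infty {f : ℂ → ℂ} {z : ℂ}
    (h : Tendsto (fun w => ‖f w‖) (𝓝[≠] z) atTop) : sphVal f z = ∞ := if_pos h

lemma tan_pole {c z : ℂ} (hc : c ≠ 0) (h : Complex.cos (c * z) = 0) :
    Tendsto (fun w => ‖Complex.tan (c * w)‖) (𝓝[≠] z) atTop := by
  have hmap : Tendsto (fun w => c * w) (𝓝[≠] z) (𝓝[≠] (c * z)) := by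
    apply tendsto_nhdsWithin_of_tendsto_nhds_of_eventually_within
    · exact ((continuous_const.mul continuous_id).tendsto z).mono_left nhdsWithin_le_nhds
    · filter_upwards [self_mem_nhdsWithin] with w hw
      exact fun hcw => hw (mul_left_cancel₀ hc hcw)
  exact (Complex.tendsto_norm_tan_of_cos_eq_zero h).comp hmap

lemma sphVal_tan_reg {c z : ℂ} (h : Complex.cos (c * z) ≠ 0) :
    sphVal (fun w => Complex.tan (c * w)) z = ((Complex.tan (c * z) : ℂ) : OnePoint ℂ) :=
  sphVal_eq_coe (((Complex.continuousAt_tan.2 h).comp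
    ((continuous_const.mul continuous_id).continuousAt)).tendsto.mono_left nhdsWithin_le_nhds)

lemma tan_ne_I (w : ℂ) : Complex.tan w ≠ Complex.I := by
  intro h
  by_cases hc : Complex.cos w = 0
  · rw [Complex.tan_eq_sin_div_cos, hc, div_zero] at h
    exact Complex.I_ne_zero h.symm
  · rw [Complex.tan_eq_sin_div_cos, div_eq_iff hc] at h
    have h2 : Complex.exp (w * Complex.I) = 0 := by
      rw [Complex.exp_mul_I]
      linear_combination Complex.I * h + Complex.cos w * Complex.I_mul_I
    exact Complex.exp_ne_zero _ h2

lemma tan_ne_neg_I (w : ℂ) : Complex.tan w ≠ -Complex.I := by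
  intro h
  by_cases hc : Complex.cos w = 0
  · rw [Complex.tan_eq_sin_div_cos, hc, div_zero] at h
    exact Complex.I_ne_zero (neg_eq_zero.mp h.symm)
  · rw [Complex.tan_eq_sin_div_cos, div_eq_iff hc] at h
    have h2 : Complex.exp (-w * Complex.I) = 0 := by
      rw [Complex.exp_mul_I, Complex.cos_neg, Complex.sin_neg]
      linear_combination (-Complex.I) * h + Complex.cos w * Complex.I_mul_I
    exact Complex.exp_ne_zero _ h2

lemma mero_bounded {a : ℂ → ℂ} (hm : MeromorphicAt a 0)
    (hnt : ¬ Tendsto (fun w => ‖a w‖) (𝓝[≠] (0:ℂ)) atTop) :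
    ∃ M : ℝ, 0 ≤ M ∧ ∀ᶠ w in 𝓝[≠] (0:ℂ), ‖a w‖ ≤ M := by
  rcases h : meromorphicOrderAt a 0 with _ | (m : ℤ)
  · refine ⟨0, le_refl 0, ?_⟩
    filter_upwards [meromorphicOrderAt_eq_top_iff.mp h] with w hw
    simp [hw]
  · obtain ⟨g, hg_an, hg_ne, hg_eq⟩ := (meromorphicOrderAt_eq_int_iff hm).mp h
    have hgt : Tendsto (fun w => ‖g w‖) (𝓝[≠] (0:ℂ)) (𝓝 ‖g 0‖) :=
      (hg_an.continuousAt.norm.tendsto).mono_left nhdsWithin_le_nhds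
    rcases le_or_gt 0 m with hm0 | hm0
    · refine ⟨‖g 0‖ + 1, by positivity, ?_⟩
      have hb : ∀ᶠ w in 𝓝[≠] (0:ℂ), ‖g w‖ ≤ ‖g 0‖ + 1 :=
        hgt.eventually_le_const (by linarith)
      have h1 : ∀ᶠ w in 𝓝[≠] (0:ℂ), ‖w‖ ≤ 1 := by
        have : ∀ᶠ w in 𝓝 (0:ℂ), ‖w‖ ≤ 1 := by
          have := Metric.closedBall_mem_nhds (0:ℂ) one_pos
          filter_upwards [this] with w hw
          simpa [Metric.mem_closedBall] using hw
        exact this.filter_mono nhdsWithin_le_nhds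
      filter_upwards [hg_eq, hb, h1, self_mem_nhdsWithin] with w hw hbw h1w hmem
      rw [hw]
      have hnn : ‖(w - 0) ^ m • g w‖ = ‖w‖ ^ m * ‖g w‖ := by
        rw [smul_eq_mul, norm_mul, norm_zpow, sub_zero]
      rw [hnn]
      have h2 : ‖w‖ ^ m ≤ 1 := by
        have hmn : ‖w‖ ^ m = ‖w‖ ^ (m.toNat) := by
          rw [← zpow_natCast, Int.toNat_of_nonneg hm0]
        rw [hmn]
        exact pow_le_one₀ (norm_nonneg _) h1w
      calc ‖w‖ ^ m * ‖g w‖ ≤ 1 * (‖g 0‖ + 1) := by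
            apply mul_le_mul h2 hbw (norm_nonneg _) zero_le_one
        _ = ‖g 0‖ + 1 := one_mul _
    · exfalso
      apply hnt
      set k : ℕ := (-m).toNat with hk
      have hk0 : k ≠ 0 := by omega
      have hkm : (k : ℤ) = -m := Int.toNat_of_nonneg (by omega)
      have hinv : Tendsto (fun w : ℂ => ‖w‖⁻¹) (𝓝[≠] (0:ℂ)) atTop := by
        apply tendsto_inv_nhdsGT_zero.comp
        apply tendsto_nhdsWithin_of_tendsto_nhds_of_eventually_within
        · exact tendsto_norm_zero.mono_left nhdsWithin_le_nhds
        · filter_upwards [self_mem_nhdsWithin] with w hw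
          exact norm_pos_iff.mpr hw
      have hpow : Tendsto (fun w : ℂ => (‖w‖⁻¹) ^ k) (𝓝[≠] (0:ℂ)) atTop :=
        (tendsto_pow_atTop hk0).comp hinv
      have hgpos : 0 < ‖g 0‖ := norm_pos_iff.mpr hg_ne
      apply (hgt.pos_mul_atTop hgpos hpow).congr'
      filter_upwards [hg_eq, self_mem_nhdsWithin] with w hw hmem
      rw [hw, smul_eq_mul, norm_mul, norm_zpow, sub_zero,
        show m = -(k:ℤ) by omega, zpow_neg, zpow_natCast, ← inv_pow, mul_comm]

lemma sph_coe_zero_inf : sph ((0:ℂ) : OnePoint ℂ) ∞ = Real.pi := by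
  rw [sph, chord_coe_inf]
  norm_num [Real.sqrt_one, Real.arcsin_one]
  ring

lemma sph_inf_coe_lower {M : ℝ} {c : ℂ} (hc : ‖c‖ ≤ M) :
    2 * Real.arcsin (1 / Real.sqrt (1 + M ^ 2)) ≤ sph ∞ (c : OnePoint ℂ) := by
  rw [sph, chord_inf_coe]
  have h2 : 2 / Real.sqrt (1 + ‖c‖ ^ 2) / 2 = 1 / Real.sqrt (1 + ‖c‖ ^ 2) := by ring
  rw [h2]
  have hM0 : 0 ≤ M := (norm_nonneg c).trans hc
  have hle : 1 / Real.sqrt (1 + M ^ 2) ≤ 1 / Real.sqrt (1 + ‖c‖ ^ 2) := by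
    apply one_div_le_one_div_of_le
    · positivity
    · apply Real.sqrt_le_sqrt
      nlinarith [norm_nonneg c]
  have := Real.monotone_arcsin hle
  linarith

lemma sph_I_neg_I_pos :
    0 < sph ((Complex.I : ℂ) : OnePoint ℂ) ((-Complex.I : ℂ) : OnePoint ℂ) := by
  rw [sph]
  have hne : Complex.I - -Complex.I ≠ 0 := by
    simp [sub_neg_eq_add]
  have hpos : 0 < chord ((Complex.I : ℂ) : OnePoint ℂ) ((-Complex.I : ℂ) : OnePoint ℂ) := by
    rw [chord_coe_coe]
    have h1 : (0:ℝ) < ‖Complex.I - -Complex.I‖ := norm_pos_iff.mpr hne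
    have h2 : (0:ℝ) < Real.sqrt ((1 + ‖Complex.I‖ ^ 2) * (1 + ‖-Complex.I‖ ^ 2)) := by
      apply Real.sqrt_pos.mpr; positivity
    positivity
  have := Real.arcsin_pos.mpr (by linarith : (0:ℝ) <
    chord ((Complex.I : ℂ) : OnePoint ℂ) ((-Complex.I : ℂ) : OnePoint ℂ) / 2)
  linarith

lemma cne (n : ℕ) : ((n:ℂ)+1) ≠ 0 := by
  have h : ((n:ℂ)+1) = ((n+1 : ℕ) : ℂ) := by push_cast; ring
  rw [h]
  exact_mod_cast Nat.succ_ne_zero n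

theorem example_tan_not_normal :
    (∀ n : ℕ, ∀ z ∈ Metric.ball (0:ℂ) 1,
        sphVal (fun w => Complex.tan (((n:ℂ)+1) * w)) z ≠ ((Complex.I : ℂ) : OnePoint ℂ) ∧
        sphVal (fun w => Complex.tan (((n:ℂ)+1) * w)) z ≠ ((-Complex.I : ℂ) : OnePoint ℂ)) ∧
    0 < sph ((Complex.I : ℂ) : OnePoint ℂ) ((-Complex.I : ℂ) : OnePoint ℂ) ∧
    (∀ n m : ℕ, ∀ a : ℂ, (a = Complex.I ∨ a = -Complex.I) → ∀ z ∈ Metric.ball (0:ℂ) 1,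
        (Complex.tan (((n:ℂ)+1) * z) - a = 0 ↔ Complex.tan (((m:ℂ)+1) * z) - a = 0)) ∧
    ¬ NormalOn (Metric.ball (0:ℂ) 1)
        {g | ∃ n : ℕ, g = fun w : ℂ => Complex.tan (((n:ℂ)+1) * w)} := by
  refine ⟨?_, sph_I_neg_I_pos, ?_, ?_⟩
  · -- part 1: omitted values
    intro n z hz
    by_cases hcz : Complex.cos (((n:ℂ)+1) * z) = 0
    · rw [sphVal_eq_infty (tan_pole (cne n) hcz)]
      exact ⟨OnePoint.infty_ne_coe _, OnePoint.infty_ne_coe _⟩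
    · rw [sphVal_tan_reg hcz]
      constructor
      · intro h
        exact tan_ne_I _ (OnePoint.coe_eq_coe.mp h)
      · intro h
        exact tan_ne_neg_I _ (OnePoint.coe_eq_coe.mp h)
  · -- part 3: shared values
    intro n m a ha z hz
    have key : ∀ k : ℕ, ¬ (Complex.tan (((k:ℂ)+1) * z) - a = 0) := by
      intro k h
      rw [sub_eq_zero] at h
      rcases ha with rfl | rfl
      · exact tan_ne_I _ h
      · exact tan_ne_neg_I _ h
    exact ⟨fun h => absurd h (key n), fun h => absurd h (key m)⟩
  · -- part 4: non-normality
    intro hN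
    obtain ⟨φ, hφ, G, hG, hconv⟩ :=
      hN (fun n w => Complex.tan (((n:ℂ)+1) * w)) (fun n => ⟨n, rfl⟩)
    have h0ball : (0:ℂ) ∈ Metric.ball (0:ℂ) 1 := mem_ball_self one_pos
    have hval0 : ∀ k : ℕ,
        sphVal (fun w => Complex.tan (((k:ℂ)+1) * w)) 0 = ((0:ℂ) : OnePoint ℂ) := by
      intro k
      have hc : Complex.cos (((k:ℂ)+1) * 0) ≠ 0 := by
        simp
      rw [sphVal_tan_reg hc]
      simp
    -- If G 0 = ∞ we get a contradiction at z = 0.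
    have hinf : G 0 ≠ ∞ := by
      intro hG0
      have h := hconv {0} (by simpa using h0ball) isCompact_singleton 1 one_pos
      obtain ⟨n, hn⟩ := h.exists
      have h2 := hn 0 rfl
      rw [hval0, hG0, sph_coe_zero_inf] at h2
      linarith [Real.pi_gt_three]
    rcases hG with ⟨a, hmero, hGa⟩ | hGinf
    swap
    · exact hinf (hGinf 0 h0ball)
    have hnt : ¬ Tendsto (fun w => ‖a w‖) (𝓝[≠] (0:ℂ)) atTop := by
      intro ht
      apply hinf
      rw [hGa 0 h0ball, sphVal_eq_infty ht]
    obtain ⟨M, hM0, hMev⟩ := mero_bounded (hmero 0 h0ball) hnt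
    have hanev : ∀ᶠ w in 𝓝[≠] (0:ℂ), AnalyticAt ℂ a w :=
      (hmero 0 h0ball).eventually_analyticAt
    set δ := 2 * Real.arcsin (1 / Real.sqrt (1 + M ^ 2)) with hδ
    have hδpos : 0 < δ := by
      apply mul_pos two_pos
      apply Real.arcsin_pos.mpr
      positivity
    have hKsub : Metric.closedBall (0:ℂ) (1/2) ⊆ Metric.ball (0:ℂ) 1 :=
      Metric.closedBall_subset_ball (by norm_num)
    have hmain := hconv _ hKsub (isCompact_closedBall _ _) δ hδpos
    -- the poles z n → 0
    set r : ℕ → ℝ := fun n => Real.pi / (2 * ((φ n : ℝ) + 1)) with hrdef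
    set z : ℕ → ℂ := fun n => ((r n : ℝ) : ℂ) with hzdef
    have hrpos : ∀ n, 0 < r n := by
      intro n
      have := Real.pi_pos
      rw [hrdef]
      positivity
    have hrt : Tendsto r atTop (𝓝 0) := by
      apply Filter.Tendsto.div_atTop (tendsto_const_nhds)
      apply Filter.Tendsto.const_mul_atTop two_pos
      exact tendsto_atTop_add_const_right _ 1
        (tendsto_natCast_atTop_atTop.comp hφ.tendsto_atTop)
    have htendz : Tendsto z atTop (𝓝[≠] (0:ℂ)) := by
      apply tendsto_nhdsWithin_of_tendsto_nhds_of_eventually_within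
      · have : Tendsto (fun n => ((r n : ℝ) : ℂ)) atTop (𝓝 ((0:ℝ) : ℂ)) :=
          (Complex.continuous_ofReal.tendsto 0).comp hrt
        simpa using this
      · filter_upwards with n
        simp only [Set.mem_compl_iff, Set.mem_singleton_iff]
        exact Complex.ofReal_ne_zero.mpr (ne_of_gt (hrpos n))
    have hnormz : ∀ n, ‖z n‖ = r n := by
      intro n
      rw [hzdef]
      simp only [Complex.norm_real]
      exact abs_of_pos (hrpos n)
    have hmem : ∀ n, 3 ≤ n → z n ∈ Metric.closedBall (0:ℂ) (1/2) := by
      intro n hn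
      rw [Metric.mem_closedBall, dist_zero_right, hnormz, hrdef]
      have hphin : (3:ℝ) ≤ (φ n : ℝ) := by
        exact_mod_cast le_trans hn (hφ.le_apply)
      have h4 : Real.pi ≤ 4 := Real.pi_le_four
      have hd : (8:ℝ) ≤ 2 * ((φ n : ℝ) + 1) := by linarith
      calc Real.pi / (2 * ((φ n : ℝ) + 1)) ≤ 4 / 8 := by
            apply div_le_div₀ (by norm_num) h4 (by norm_num) hd
        _ = 1/2 := by norm_num
    have hpole : ∀ n, sphVal (fun w => Complex.tan (((φ n : ℂ)+1) * w)) (z n) = ∞ := by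
      intro n
      apply sphVal_eq_infty
      apply tan_pole (cne (φ n))
      have hc : ((φ n : ℂ)+1) * z n = ((Real.pi/2 : ℝ) : ℂ) := by
        rw [hzdef, hrdef]
        push_cast
        rw [mul_div_assoc', mul_comm 2 ((φ n : ℂ) + 1),
          mul_div_mul_left _ _ (cne (φ n))]
      rw [hc]
      push_cast
      exact Complex.cos_pi_div_two
    obtain ⟨n, hconvn, hMn, hann, hn3⟩ :=
      (hmain.and ((htendz.eventually hMev).and
        ((htendz.eventually hanev).and (eventually_ge_atTop 3)))).exists
    have hz1 : z n ∈ Metric.closedBall (0:ℂ) (1/2) := hmem n hn3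
    have h1 := hconvn (z n) hz1
    rw [hpole n] at h1
    have hzball : z n ∈ Metric.ball (0:ℂ) 1 := hKsub hz1
    rw [hGa _ hzball] at h1
    have hsa : sphVal a (z n) = ((a (z n) : ℂ) : OnePoint ℂ) :=
      sphVal_eq_coe (hann.continuousAt.tendsto.mono_left nhdsWithin_le_nhds)
    rw [hsa] at h1
    exact absurd h1 (not_lt.mpr (sph_inf_coe_lower hMn))
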